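/- Let q be an acyclic natural join query with a join tree T rooted at a relation r, and let I be an instance. Perform a forward pass: process the vertices of T in an order in which every child precedes its parent, and when processing a vertex R, replace the current content of R by R ⋉ S successively for each child S of R in T. Then perform a backward pass: process the vertices in an order in which every parent precedes its children, and for each non-root vertex R with parent P in T, replace the current content of R by R ⋉ P. Then the resulting instance I* is a full reduction of I: for every relation R of q, I*(R) = π_{attr(R)}(q(I)); in particular, q(I*) = q(I) and I* is fully reduced. -/

import Mathlib

namespace JoinQuery

universe u

variable {ι : Type} {α : Type}

/-- A *tuple* over a finite set `X` of attributes, with values in the domain `D`: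
a function assigning a domain value to each attribute of `X`. -/
def Tuple (D : Type u) {α : Type} (X : Finset α) : Type u := {a // a ∈ X} → D

/-- Projection: the restriction of a tuple over `X` to a subset `Y ⊆ X` of the attributes. -/
def restrict {D : Type u} {X Y : Finset α} (h : Y ⊆ X) (t : Tuple D X) : Tuple D Y :=
  fun a => t ⟨a.1, h a.2⟩

/-- A database instance for the natural join query whose relation symbols are the elements
of `ι` with attribute sets given by `attr`: a finite set of tuples for every relation. -/
structure Inst (attr : ι → Finset α) (D : Type u) where
  rel : ∀ R : ι, Set (Tuple D (attr R))
  finite : ∀ R : ι, (rel R).Finite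

/-- The set of attributes of the (sub)query given by the set `S` of relations. -/
def attrsOf [DecidableEq α] (attr : ι → Finset α) (S : Finset ι) : Finset α :=
  S.biUnion attr

theorem attr_subset_attrsOf [DecidableEq α] (attr : ι → Finset α) {S : Finset ι} {R : ι}
    (hR : R ∈ S) : attr R ⊆ attrsOf attr S :=
  Finset.subset_biUnion_of_mem attr hR

theorem attrsOf_mono [DecidableEq α] (attr : ι → Finset α) {S₁ S₂ : Finset ι} (h : S₁ ⊆ S₂) :
    attrsOf attr S₁ ⊆ attrsOf attr S₂ :=
  Finset.biUnion_subset_biUnion_of_subset_left attr h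

/-- The output of the natural join of the relations in `S`, on the instance `I`:
all tuples over the attributes of `S` whose restriction to each relation `R ∈ S`
belongs to `I.rel R`. -/
def output [DecidableEq α] {D : Type u} (attr : ι → Finset α) (I : Inst attr D)
    (S : Finset ι) : Set (Tuple D (attrsOf attr S)) :=
  {t | ∀ (R : ι) (hR : R ∈ S), restrict (attr_subset_attrsOf attr hR) t ∈ I.rel R}

/-- The output `q(I)` of the full query (the natural join of all relations). -/
def fullOutput [Fintype ι] [DecidableEq α] {D : Type u} (attr : ι → Finset α)
    (I : Inst attr D) : Set (Tuple D (attrsOf attr Finset.univ)) :=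
  output attr I Finset.univ

/-- An instance is *fully reduced* if every relation equals the projection of the
full output onto its attributes. -/
def FullyReduced [Fintype ι] [DecidableEq α] {D : Type u} (attr : ι → Finset α)
    (I : Inst attr D) : Prop :=
  ∀ R : ι,
    I.rel R = restrict (attr_subset_attrsOf attr (Finset.mem_univ R)) '' fullOutput attr I

/-- The subjoin given by the set `S` of relations is *safe*: on every fully reduced
instance, its output is the projection of the full output onto its attributes. -/
def Safe [Fintype ι] [DecidableEq α] (attr : ι → Finset α) (S : Finset ι) : Prop :=
  ∀ (D : Type u) (I : Inst attr D), FullyReduced attr I →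
    output attr I S =
      restrict (attrsOf_mono attr (Finset.subset_univ S)) '' fullOutput attr I

/-- The *join graph* of the query: vertices are the relations, two distinct relations
being adjacent iff they share an attribute. -/
def joinGraph [DecidableEq α] (attr : ι → Finset α) : SimpleGraph ι where
  Adj R S := R ≠ S ∧ (attr R ∩ attr S).Nonempty
  symm := by
    refine ⟨?_⟩
    intro R S h
    exact ⟨h.1.symm, by rw [Finset.inter_comm]; exact h.2⟩
  loopless := by refine ⟨?_⟩; intro R h; exact h.1 rfl

/-- `T` is a spanning tree of the graph `G` (a tree on the same vertex set all of whose
edges are edges of `G`). -/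
def IsSpanningTree (G T : SimpleGraph ι) : Prop :=
  T ≤ G ∧ T.IsTree

/-- `T` is a *join tree* of the query: a spanning tree of the join graph such that, for
every attribute `A` (occurring in the query), the relations containing `A` induce a
connected subgraph of `T`. -/
def IsJoinTree [DecidableEq α] (attr : ι → Finset α) (T : SimpleGraph ι) : Prop :=
  IsSpanningTree (joinGraph attr) T ∧
    ∀ A : α, (∃ R : ι, A ∈ attr R) → (T.induce {R : ι | A ∈ attr R}).Connected

/-- The query is (α-)acyclic iff it has a join tree. -/
def Acyclic [DecidableEq α] (attr : ι → Finset α) : Prop :=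
  ∃ T : SimpleGraph ι, IsJoinTree attr T

/-- The weight of an edge `{R, S}`: the number of shared attributes `|attr R ∩ attr S|`. -/
def edgeWeight [DecidableEq α] (attr : ι → Finset α) : Sym2 ι → ℕ :=
  Sym2.lift ⟨fun R S => (attr R ∩ attr S).card, fun R S => by simp [Finset.inter_comm]⟩

/-- The total weight of (the edges of) a graph `T`. -/
noncomputable def weight [DecidableEq α] (attr : ι → Finset α) (T : SimpleGraph ι) : ℕ :=
  ∑ᶠ e ∈ T.edgeSet, edgeWeight attr e

/-- `T` is a maximum spanning tree of the weighted join graph. -/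
def IsMaxSpanningTree [DecidableEq α] (attr : ι → Finset α) (T : SimpleGraph ι) : Prop :=
  IsSpanningTree (joinGraph attr) T ∧
    ∀ T' : SimpleGraph ι, IsSpanningTree (joinGraph attr) T' →
      weight attr T' ≤ weight attr T

/-- γ-acyclicity: α-acyclicity together with the absence of a γ-cycle of size 3,
i.e. of three distinct relations `R, S, T` and three distinct attributes `x, y, z`
with `x, y ∈ attr R`, `y, z ∈ attr S` and `x, y, z ∈ attr T`. -/
def GammaAcyclic [DecidableEq α] (attr : ι → Finset α) : Prop :=
  Acyclic attr ∧
    ¬ ∃ (R S T : ι) (x y z : α),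
        R ≠ S ∧ R ≠ T ∧ S ≠ T ∧ x ≠ y ∧ x ≠ z ∧ y ≠ z ∧
        x ∈ attr R ∧ y ∈ attr R ∧ y ∈ attr S ∧ z ∈ attr S ∧
        x ∈ attr T ∧ y ∈ attr T ∧ z ∈ attr T

/-- A *connected subjoin*: a nonempty set of relations inducing a connected subgraph
of the join graph. -/
def ConnectedSubjoin [DecidableEq α] (attr : ι → Finset α) (S : Finset ι) : Prop :=
  S.Nonempty ∧ ((joinGraph attr).induce (S : Set ι)).Connected

/-- The number of edges of `T` whose both endpoints contain the attribute `A`. -/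
noncomputable def eCount (attr : ι → Finset α) (T : SimpleGraph ι) (A : α) : ℕ :=
  {e ∈ T.edgeSet | ∀ R ∈ e, A ∈ attr R}.ncard

/-- The number of relations whose attribute set contains `A`. -/
noncomputable def nCount (attr : ι → Finset α) (A : α) : ℕ :=
  {R : ι | A ∈ attr R}.ncard

/-- A (binary) join expression over the relation symbols `ι`. -/
inductive JoinExpr (ι : Type) : Type where
  | leaf : ι → JoinExpr ι
  | node : JoinExpr ι → JoinExpr ι → JoinExpr ι

namespace JoinExpr

/-- The list of leaves of a join expression. -/
def leaves {ι : Type} : JoinExpr ι → List ι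
  | leaf R => [R]
  | node l r => l.leaves ++ r.leaves

/-- The set of relations appearing in a join expression. -/
def rels {ι : Type} [DecidableEq ι] : JoinExpr ι → Finset ι
  | leaf R => {R}
  | node l r => l.rels ∪ r.rels

/-- The leaves of the expression are exactly the relations of the query,
each occurring once. -/
def Complete {ι : Type} (θ : JoinExpr ι) : Prop :=
  θ.leaves.Nodup ∧ ∀ R : ι, R ∈ θ.leaves

/-- The expression has no Cartesian products: at every internal node, the relations of the
two subtrees are joined by at least one edge of `G`. -/
def ConnectedExpr {ι : Type} [DecidableEq ι] (G : SimpleGraph ι) : JoinExpr ι → Prop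
  | leaf _ => True
  | node l r =>
      (∃ R ∈ l.rels, ∃ S ∈ r.rels, G.Adj R S) ∧ ConnectedExpr G l ∧ ConnectedExpr G r

/-- The expression is *monotone* on the instance `I`: at every internal node
`θ' = θ'₁ ⋈ θ'₂`, the output of each child equals the projection of the output of the
node onto the child's attributes (no tuple of either input is removed by the join). -/
def MonotoneOn {ι α : Type} [DecidableEq ι] [DecidableEq α] {D : Type u}
    (attr : ι → Finset α) (I : Inst attr D) : JoinExpr ι → Prop
  | leaf _ => True
  | node l r =>
      output attr I l.rels =
        restrict (attrsOf_mono attr Finset.subset_union_left) ''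
          output attr I (l.rels ∪ r.rels) ∧
      output attr I r.rels =
        restrict (attrsOf_mono attr Finset.subset_union_right) ''
          output attr I (l.rels ∪ r.rels) ∧
      MonotoneOn attr I l ∧ MonotoneOn attr I r

end JoinExpr

/-- Two tuples (over possibly different attribute sets) *agree* on their common attributes. -/
def AgreeOn {α : Type} {D : Type u} {X Y : Finset α} (t : Tuple D X) (s : Tuple D Y) : Prop :=
  ∀ (a : α) (ha : a ∈ X) (hb : a ∈ Y), t ⟨a, ha⟩ = s ⟨a, hb⟩

/-- The semi-join `R ⋉ S` on the instance `I`: the tuples of `I.rel R` having a match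
in `I.rel S` (a tuple agreeing with them on `attr R ∩ attr S`). -/
def semiJoin {D : Type u} (attr : ι → Finset α) (I : Inst attr D) (R S : ι) :
    Set (Tuple D (attr R)) :=
  {t ∈ I.rel R | ∃ s ∈ I.rel S, AgreeOn t s}

/-- The instance obtained from `I` by replacing the content of relation `R` with the
semi-join `R ⋉ S` (all other relations unchanged). -/
def Inst.semiJoinUpdate [DecidableEq ι] {attr : ι → Finset α} {D : Type u}
    (I : Inst attr D) (R S : ι) : Inst attr D where
  rel := Function.update I.rel R (semiJoin attr I R S)
  finite := by
    intro R'
    rcases eq_or_ne R' R with rfl | h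
    · rw [Function.update_self]
      exact (I.finite R').subset fun t ht => ht.1
    · rw [Function.update_of_ne h]
      exact I.finite R'

/-- The forward pass of the semi-join phase: process the vertices in the order given by
the list `L`; when processing a vertex `R`, successively replace its content by `R ⋉ S`
for each of its children `S` (listed by `childList R`). -/
def forwardPass [DecidableEq ι] {attr : ι → Finset α} {D : Type u}
    (I : Inst attr D) (L : List ι) (childList : ι → List ι) : Inst attr D :=
  L.foldl (fun J R => (childList R).foldl (fun K S => K.semiJoinUpdate R S) J) I

/-- The backward pass of the semi-join phase: process the vertices in the order given by
the list `L`; when processing a non-root vertex `R`, replace its content by `R ⋉ par R`. -/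
def backwardPass [DecidableEq ι] {attr : ι → Finset α} {D : Type u}
    (I : Inst attr D) (L : List ι) (r : ι) (par : ι → ι) : Inst attr D :=
  L.foldl (fun J R => if R = r then J else J.semiJoinUpdate R (par R)) I

end JoinQuery

/-!
Semi-joins only delete tuples, and never one that extends to a tuple of the full output, so the
two passes leave `q(I)` unchanged. After the forward pass every tuple of a parent has a partner in
each child; the backward pass then replaces each child `R` by `R ⋉ P`, where the parent `P` is
already in its final state. Hence in `I*` every tuple has a partner across every edge of the join
tree. On a join tree this local consistency is global: a tuple consistent with a connected set `S`
of relations extends across an edge `xy` leaving `S`, because by the running-intersection property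
the attributes `y` shares with `S` all lie in `x`. Growing `S` from a single relation to all of
them extends each tuple of `I*` to a tuple of `q(I*) = q(I)`.
-/

theorem List.mem_of_pair_sublist_append_cons {α : Type*} {w R : α} {L₂ : List α} (hR : R ∉ L₂) :
    ∀ {L₁ : List α}, [w, R].Sublist (L₁ ++ R :: L₂) → w ∈ L₁
  | [], h => by
    rcases h with _ | ⟨_, h⟩ | ⟨_, h⟩ <;> exact absurd (h.subset (by simp)) hR
  | c :: L₁, .cons _ h => List.mem_cons_of_mem c (mem_of_pair_sublist_append_cons hR h)
  | _ :: _, .cons_cons _ _ => List.mem_cons_self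

namespace SimpleGraph

variable {V : Type*} {G : SimpleGraph V}

theorem Preconnected.exists_walk_of_induce {s : Set V} (h : (G.induce s).Preconnected) {u v : V}
    (hu : u ∈ s) (hv : v ∈ s) : ∃ p : G.Walk u v, ∀ z ∈ p.support, z ∈ s := by
  obtain ⟨q⟩ := h ⟨u, hu⟩ ⟨v, hv⟩
  have hq : ∀ z ∈ (q.map (Embedding.induce s).toHom).support, z ∈ s := by
    simp only [Walk.support_map, List.mem_map]
    rintro _ ⟨z, -, rfl⟩
    exact z.2
  exact ⟨_, hq⟩

theorem Preconnected.exists_adj_mem_notMem (h : G.Preconnected) {s : Set V} {u v : V}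
    (hu : u ∈ s) (hv : v ∉ s) : ∃ x ∈ s, ∃ y ∉ s, G.Adj x y := by
  obtain ⟨p⟩ := h u v
  obtain ⟨d, -, hd₁, hd₂⟩ := p.exists_boundary_dart s hu hv
  exact ⟨d.fst, hd₁, d.snd, hd₂, d.adj⟩

theorem IsAcyclic.mem_support_of_adj [DecidableEq V] (hG : G.IsAcyclic) {w x y : V}
    (hxy : G.Adj x y) (p : G.Walk w x) (hy : y ∉ p.support) (q : G.Walk w y) : x ∈ q.support :=
  q.support_bypass_subset_support <|
    hG.mem_support_of_ne_mem_support_of_adj_of_isPath q.bypass_isPath p.bypass_isPath hxy.symm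
      fun h => hy (p.support_bypass_subset_support h)

end SimpleGraph

namespace JoinQuery

section Tuples

variable {α : Type} {D : Type*} {X Y Z : Finset α}

theorem AgreeOn.symm {t : Tuple D X} {s : Tuple D Y} (h : AgreeOn t s) : AgreeOn s t :=
  fun a ha hb => (h a hb ha).symm

theorem AgreeOn.trans {t : Tuple D X} {s : Tuple D Y} {v : Tuple D Z} (h₁ : AgreeOn t s)
    (h₂ : AgreeOn s v) (hZY : Z ⊆ Y) : AgreeOn t v :=
  fun a ha hc => (h₁ a ha (hZY hc)).trans (h₂ a (hZY hc) hc)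

theorem AgreeOn.restrict_eq {t : Tuple D X} {s : Tuple D Y} (h : AgreeOn t s) (hX : Z ⊆ X)
    (hY : Z ⊆ Y) : restrict hX t = restrict hY s :=
  funext fun a => h a.1 (hX a.2) (hY a.2)

theorem agreeOn_restrict_restrict (hY : Y ⊆ X) (hZ : Z ⊆ X) (t : Tuple D X) :
    AgreeOn (restrict hY t) (restrict hZ t) :=
  fun _ _ _ => rfl

end Tuples

variable {ι α : Type} {attr : ι → Finset α} {D : Type*}

/-- `R ⋉ S = R` for every edge `RS` of `T`. -/
def ConsistentAlong (T : SimpleGraph ι) (J : Inst attr D) : Prop :=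
  ∀ R S, T.Adj R S → ∀ t ∈ J.rel R, ∃ s ∈ J.rel S, AgreeOn t s

section SemiJoin

variable [DecidableEq ι]

theorem Inst.semiJoinUpdate_rel_self (J : Inst attr D) (R S : ι) :
    (J.semiJoinUpdate R S).rel R = semiJoin attr J R S :=
  Function.update_self _ _ _

theorem Inst.semiJoinUpdate_rel_of_ne (J : Inst attr D) {R w : ι} (S : ι) (h : w ≠ R) :
    (J.semiJoinUpdate R S).rel w = J.rel w :=
  Function.update_of_ne h _ _

theorem Inst.semiJoinUpdate_rel_subset (J : Inst attr D) (R S w : ι) :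
    (J.semiJoinUpdate R S).rel w ⊆ J.rel w := by
  rcases eq_or_ne w R with rfl | h
  · rw [semiJoinUpdate_rel_self]
    exact fun t ht => ht.1
  · rw [semiJoinUpdate_rel_of_ne J S h]

-- A tuple of the full output restricts, on `S`, to a partner of its own restriction to `R`.
theorem fullOutput_semiJoinUpdate [Fintype ι] [DecidableEq α] (J : Inst attr D) (R S : ι) :
    fullOutput attr (J.semiJoinUpdate R S) = fullOutput attr J := by
  ext t
  refine ⟨fun ht w hw => J.semiJoinUpdate_rel_subset R S w (ht w hw), fun ht w hw => ?_⟩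
  rcases eq_or_ne w R with rfl | h
  · rw [Inst.semiJoinUpdate_rel_self]
    exact ⟨ht w hw, _, ht S (Finset.mem_univ S), agreeOn_restrict_restrict _ _ t⟩
  · rw [Inst.semiJoinUpdate_rel_of_ne J S h]
    exact ht w hw

theorem foldl_semiJoinUpdate_rel_self {P : ι} {cs : List ι} (hP : P ∉ cs) (J : Inst attr D) :
    (cs.foldl (fun K S => K.semiJoinUpdate P S) J).rel P =
      {t ∈ J.rel P | ∀ S ∈ cs, ∃ s ∈ J.rel S, AgreeOn t s} := by
  induction cs generalizing J with
  | nil => simp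
  | cons c cs ih =>
    rw [List.foldl_cons, ih (fun h => hP (List.mem_cons_of_mem c h)),
      Inst.semiJoinUpdate_rel_self]
    ext t
    simp only [semiJoin, Set.mem_ofPred_eq, List.mem_cons, forall_eq_or_imp]
    have hS : ∀ S ∈ cs, (J.semiJoinUpdate P c).rel S = J.rel S := fun S hS =>
      J.semiJoinUpdate_rel_of_ne c fun h => hP (h ▸ List.mem_cons_of_mem c hS)
    grind

end SemiJoin

section Folds

def IsLocalStep (f : Inst attr D → ι → Inst attr D) : Prop :=
  ∀ J v w, w ≠ v → (f J v).rel w = J.rel w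

theorem IsLocalStep.foldl_rel_of_notMem {f : Inst attr D → ι → Inst attr D} (hf : IsLocalStep f)
    {L : List ι} {w : ι} (hw : w ∉ L) (J : Inst attr D) : (L.foldl f J).rel w = J.rel w :=
  List.foldlRecOn (motive := fun K => K.rel w = J.rel w) L f rfl
    fun K hK v hv => (hf K v w fun h => hw (h ▸ hv)).trans hK

/-- `K` is the instance just before `R` is processed. -/
theorem IsLocalStep.exists_foldl_rel_eq {f : Inst attr D → ι → Inst attr D} (hf : IsLocalStep f)
    {L : List ι} (hL : L.Nodup) {R : ι} (hR : R ∈ L) (J : Inst attr D) :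
    ∃ K : Inst attr D, K.rel R = J.rel R ∧ (L.foldl f J).rel R = (f K R).rel R ∧
      ∀ w, [w, R].Sublist L → (L.foldl f J).rel w = K.rel w := by
  obtain ⟨L₁, L₂, rfl⟩ := List.append_of_mem hR
  have hRL₁ : R ∉ L₁ := fun h => List.disjoint_of_nodup_append hL h List.mem_cons_self
  have hRL₂ : R ∉ L₂ := (List.nodup_cons.1 hL.of_append_right).1
  refine ⟨L₁.foldl f J, hf.foldl_rel_of_notMem hRL₁ J, ?_, fun w hw => ?_⟩
  · rw [List.foldl_append, List.foldl_cons]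
    exact hf.foldl_rel_of_notMem hRL₂ _
  · rw [List.foldl_append]
    exact hf.foldl_rel_of_notMem
      (List.disjoint_of_nodup_append hL (List.mem_of_pair_sublist_append_cons hRL₂ hw)) _

theorem fullOutput_foldl [Fintype ι] [DecidableEq α] {f : Inst attr D → ι → Inst attr D}
    (hf : ∀ J v, fullOutput attr (f J v) = fullOutput attr J) (L : List ι) (J : Inst attr D) :
    fullOutput attr (L.foldl f J) = fullOutput attr J :=
  List.foldlRecOn (motive := fun K => fullOutput attr K = fullOutput attr J) L f rfl
    fun K hK v _ => (hf K v).trans hK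

end Folds

section Passes

variable [DecidableEq ι]

def forwardStep (childList : ι → List ι) (J : Inst attr D) (R : ι) : Inst attr D :=
  (childList R).foldl (fun K S => K.semiJoinUpdate R S) J

def backwardStep (r : ι) (par : ι → ι) (J : Inst attr D) (R : ι) : Inst attr D :=
  if R = r then J else J.semiJoinUpdate R (par R)

theorem isLocalStep_forwardStep (childList : ι → List ι) :
    IsLocalStep (forwardStep (attr := attr) (D := D) childList) := fun J _ w hw =>
  List.foldlRecOn (motive := fun K : Inst attr D => K.rel w = J.rel w) _ _ rfl
    fun K hK S _ => (K.semiJoinUpdate_rel_of_ne S hw).trans hK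

theorem isLocalStep_backwardStep (r : ι) (par : ι → ι) :
    IsLocalStep (backwardStep (attr := attr) (D := D) r par) := fun J v w hw => by
  unfold backwardStep
  split_ifs
  · rfl
  · exact J.semiJoinUpdate_rel_of_ne _ hw

theorem forwardPass_eq_foldl (I : Inst attr D) (L : List ι) (childList : ι → List ι) :
    forwardPass I L childList = L.foldl (forwardStep childList) I :=
  rfl

theorem backwardPass_eq_foldl (J : Inst attr D) (L : List ι) (r : ι) (par : ι → ι) :
    backwardPass J L r par = L.foldl (backwardStep r par) J :=
  rfl

theorem forwardPass_rel {I : Inst attr D} {L : List ι} {childList : ι → List ι} (hL : L.Nodup)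
    {P : ι} (hP : P ∈ L) (horder : ∀ S ∈ childList P, [S, P].Sublist L) :
    (forwardPass I L childList).rel P = {t ∈ I.rel P |
      ∀ S ∈ childList P, ∃ s ∈ (forwardPass I L childList).rel S, AgreeOn t s} := by
  obtain ⟨K, hKP, hstep, hbefore⟩ :=
    (isLocalStep_forwardStep childList).exists_foldl_rel_eq hL hP I
  have hPP : P ∉ childList P := fun h => by simpa using hL.sublist (horder P h)
  rw [forwardPass_eq_foldl, hstep, forwardStep, foldl_semiJoinUpdate_rel_self hPP, hKP]
  ext t
  refine and_congr_right fun _ => forall₂_congr fun S hS => ?_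
  rw [hbefore S (horder S hS)]

theorem backwardPass_rel {J : Inst attr D} {L : List ι} {r : ι} {par : ι → ι} (hL : L.Nodup)
    {R : ι} (hR : R ≠ r) (horder : [par R, R].Sublist L) :
    (backwardPass J L r par).rel R =
      {t ∈ J.rel R | ∃ s ∈ (backwardPass J L r par).rel (par R), AgreeOn t s} := by
  obtain ⟨K, hKR, hstep, hbefore⟩ := (isLocalStep_backwardStep r par).exists_foldl_rel_eq hL
    (horder.subset (by simp : R ∈ [par R, R])) J
  rw [backwardPass_eq_foldl, hstep, backwardStep, if_neg hR, Inst.semiJoinUpdate_rel_self,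
    semiJoin, hKR, hbefore (par R) horder]

theorem backwardPass_rel_subset (J : Inst attr D) (L : List ι) (r : ι) (par : ι → ι) (w : ι) :
    (backwardPass J L r par).rel w ⊆ J.rel w :=
  List.foldlRecOn (motive := fun K => K.rel w ⊆ J.rel w) L (backwardStep r par) subset_rfl
    fun K hK v _ => by
      unfold backwardStep
      split_ifs
      · exact hK
      · exact (K.semiJoinUpdate_rel_subset v _ w).trans hK

theorem fullOutput_forwardPass [Fintype ι] [DecidableEq α] (I : Inst attr D) (L : List ι)
    (childList : ι → List ι) : fullOutput attr (forwardPass I L childList) = fullOutput attr I :=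
  fullOutput_foldl (fun J R => fullOutput_foldl (fun K S => fullOutput_semiJoinUpdate K R S) _ J)
    L I

theorem fullOutput_backwardPass [Fintype ι] [DecidableEq α] (J : Inst attr D) (L : List ι) (r : ι)
    (par : ι → ι) : fullOutput attr (backwardPass J L r par) = fullOutput attr J :=
  fullOutput_foldl (fun K R => by
    split_ifs
    · rfl
    · exact fullOutput_semiJoinUpdate K R (par R)) L J

theorem consistentAlong_backwardPass_forwardPass {T : SimpleGraph ι} {r : ι} {par : ι → ι}
    (hpar : ∀ R S : ι, T.Adj R S ↔ ((R ≠ r ∧ par R = S) ∨ (S ≠ r ∧ par S = R)))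
    {childList : ι → List ι} (hchild : ∀ R S : ι, S ∈ childList R ↔ (S ≠ r ∧ par S = R))
    {Lf : List ι} (hLf_nodup : Lf.Nodup) (hLf_order : ∀ R : ι, R ≠ r → [R, par R].Sublist Lf)
    {Lb : List ι} (hLb_nodup : Lb.Nodup) (hLb_order : ∀ R : ι, R ≠ r → [par R, R].Sublist Lb)
    (I : Inst attr D) :
    ConsistentAlong T (backwardPass (forwardPass I Lf childList) Lb r par) := by
  set Jf := forwardPass I Lf childList
  set J := backwardPass Jf Lb r par
  have hback (R : ι) (hR : R ≠ r) : J.rel R = {t ∈ Jf.rel R | ∃ s ∈ J.rel (par R), AgreeOn t s} :=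
    backwardPass_rel hLb_nodup hR (hLb_order R hR)
  have hfwd (S : ι) (hS : S ≠ r) : ∀ t ∈ Jf.rel (par S), ∃ s ∈ Jf.rel S, AgreeOn t s := by
    have horder : ∀ S' ∈ childList (par S), [S', par S].Sublist Lf := fun S' hS' => by
      obtain ⟨hS'r, hS'par⟩ := (hchild _ _).1 hS'
      exact hS'par ▸ hLf_order S' hS'r
    intro t ht
    exact ((forwardPass_rel hLf_nodup ((hLf_order S hS).subset (by simp)) horder).subset ht).2 S
      ((hchild _ _).2 ⟨hS, rfl⟩)
  intro u v huv t ht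
  rcases (hpar u v).1 huv with ⟨hu, rfl⟩ | ⟨hv, rfl⟩
  · exact ((hback u hu).subset ht).2
  · obtain ⟨s, hs, hts⟩ := hfwd v hv t (backwardPass_rel_subset Jf Lb r par _ ht)
    exact ⟨s, (hback v hv).symm.subset ⟨hs, t, ht, hts.symm⟩, hts⟩

end Passes

section JoinTree

variable [DecidableEq α] {T : SimpleGraph ι} {J : Inst attr D}

theorem IsJoinTree.mem_attr_of_adj (hT : IsJoinTree attr T) {w x y : ι} (hxy : T.Adj x y)
    (p : T.Walk w x) (hy : y ∉ p.support) {a : α} (hw : a ∈ attr w) (hay : a ∈ attr y) :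
    a ∈ attr x := by
  classical
  obtain ⟨q, hq⟩ := (hT.2 a ⟨w, hw⟩).preconnected.exists_walk_of_induce hw hay
  exact hq x (hT.1.2.isAcyclic.mem_support_of_adj hxy p hy q)

theorem exists_mem_output_insert_agreeOn [DecidableEq ι] (hT : IsJoinTree attr T)
    (hJ : ConsistentAlong T J) {S : Finset ι} (hS : (T.induce (S : Set ι)).Preconnected)
    {x y : ι} (hx : x ∈ S) (hy : y ∉ S) (hxy : T.Adj x y) {u : Tuple D (attrsOf attr S)}
    (hu : u ∈ output attr J S) : ∃ u' ∈ output attr J (insert y S), AgreeOn u' u := by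
  obtain ⟨s, hs, hus⟩ := hJ x y hxy _ (hu x hx)
  have hsep : ∀ a ∈ attrsOf attr S, a ∈ attr y → a ∈ attr x := by
    intro a ha hay
    obtain ⟨w, hw, haw⟩ := Finset.mem_biUnion.1 ha
    obtain ⟨p, hp⟩ := hS.exists_walk_of_induce hw hx
    exact hT.mem_attr_of_adj hxy p (fun h => hy (hp y h)) haw hay
  let u' : Tuple D (attrsOf attr (insert y S)) := fun a =>
    if h : a.1 ∈ attr y then s ⟨a.1, h⟩ else u ⟨a.1, by simpa [attrsOf, h] using a.2⟩
  have hu'u : AgreeOn u' u := by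
    intro a _ ha
    simp only [u']
    split_ifs with hay
    · exact (hus a (hsep a ha hay) hay).symm
    · rfl
  refine ⟨u', fun w hw => ?_, hu'u⟩
  rcases Finset.mem_insert.1 hw with rfl | hw
  · convert hs
    funext a
    exact dif_pos a.2
  · rw [hu'u.restrict_eq _ (attr_subset_attrsOf attr hw)]
    exact hu w hw

theorem exists_mem_fullOutput_agreeOn [Fintype ι] [DecidableEq ι] (hT : IsJoinTree attr T)
    (hJ : ConsistentAlong T J) (S : Finset ι) (hS : (T.induce (S : Set ι)).Connected)
    (u : Tuple D (attrsOf attr S)) (hu : u ∈ output attr J S) :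
    ∃ u' ∈ fullOutput attr J, AgreeOn u' u := by
  by_cases hSu : S = Finset.univ
  · subst hSu
    exact ⟨u, hu, fun _ _ _ => rfl⟩
  obtain ⟨x₀, hx₀⟩ := hS.nonempty.some
  obtain ⟨v, -, hv⟩ := Finset.exists_of_ssubset (Finset.ssubset_univ_iff.2 hSu)
  obtain ⟨x, hx, y, hy, hxy⟩ := hT.1.2.connected.preconnected.exists_adj_mem_notMem hx₀
    (show v ∉ (S : Set ι) from hv)
  obtain ⟨u', hu', hu'u⟩ := exists_mem_output_insert_agreeOn hT hJ hS.preconnected hx hy hxy hu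
  have hS' : (T.induce (insert y S : Finset ι)).Connected := by
    have hset : ((insert y S : Finset ι) : Set ι) = (S : Set ι) ∪ {x, y} := by
      ext z
      simp only [Finset.coe_insert, Set.mem_insert_iff, Set.mem_union, Finset.mem_coe]
      grind
    rw [hset]
    exact SimpleGraph.induce_union_connected hS.preconnected
      (SimpleGraph.induce_pair_connected_of_adj hxy).preconnected ⟨x, hx, by simp⟩
  obtain ⟨u'', hu'', hu''u'⟩ := exists_mem_fullOutput_agreeOn hT hJ _ hS' u' hu'
  exact ⟨u'', hu'', hu''u'.trans hu'u (attrsOf_mono attr (Finset.subset_insert y S))⟩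
termination_by (Finset.univ \ S).card
decreasing_by
  exact Finset.card_lt_card <| (Finset.ssubset_iff_of_subset
    (Finset.sdiff_subset_sdiff subset_rfl (Finset.subset_insert y S))).2
      ⟨y, Finset.mem_sdiff.2 ⟨Finset.mem_univ y, hy⟩, by simp⟩

theorem IsJoinTree.fullyReduced [Fintype ι] [DecidableEq ι] (hT : IsJoinTree attr T)
    (hJ : ConsistentAlong T J) : FullyReduced attr J := by
  intro R
  ext t
  refine ⟨fun ht => ?_, ?_⟩
  · let u : Tuple D (attrsOf attr {R}) := fun a => t ⟨a.1, by simpa [attrsOf] using a.2⟩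
    obtain ⟨v, hv, hvu⟩ := exists_mem_fullOutput_agreeOn hT hJ {R}
      (by rw [Finset.coe_singleton]; exact ⟨SimpleGraph.Preconnected.of_subsingleton⟩) u
      (fun w hw => by obtain rfl := Finset.mem_singleton.1 hw; exact ht)
    exact ⟨v, hv, funext fun a => hvu a.1 _ (by simp [attrsOf, a.2])⟩
  · rintro ⟨v, hv, rfl⟩
    exact hv R (Finset.mem_univ R)

end JoinTree

universe v

theorem yannakakis_full_reduction_general {ι α : Type} [Fintype ι] [DecidableEq ι] [DecidableEq α]
    (attr : ι → Finset α)
    (T : SimpleGraph ι) (hT : IsJoinTree attr T)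
    (r : ι) (par : ι → ι)
    (hpar : ∀ R S : ι, T.Adj R S ↔ ((R ≠ r ∧ par R = S) ∨ (S ≠ r ∧ par S = R)))
    (childList : ι → List ι)
    (hchild : ∀ R S : ι, S ∈ childList R ↔ (S ≠ r ∧ par S = R))
    (Lf : List ι) (hLf_nodup : Lf.Nodup)
    (hLf_order : ∀ R : ι, R ≠ r → List.Sublist [R, par R] Lf)
    (Lb : List ι) (hLb_nodup : Lb.Nodup)
    (hLb_order : ∀ R : ι, R ≠ r → List.Sublist [par R, R] Lb)
    {D : Type v} (I : Inst attr D) :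
    (∀ R : ι,
      (backwardPass (forwardPass I Lf childList) Lb r par).rel R =
        restrict (attr_subset_attrsOf attr (Finset.mem_univ R)) '' fullOutput attr I) ∧
    fullOutput attr (backwardPass (forwardPass I Lf childList) Lb r par) =
      fullOutput attr I ∧
    FullyReduced attr (backwardPass (forwardPass I Lf childList) Lb r par) := by
  have hout : fullOutput attr (backwardPass (forwardPass I Lf childList) Lb r par) =
      fullOutput attr I :=
    (fullOutput_backwardPass _ Lb r par).trans (fullOutput_forwardPass I Lf childList)
  have hred : FullyReduced attr (backwardPass (forwardPass I Lf childList) Lb r par) :=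
    hT.fullyReduced (consistentAlong_backwardPass_forwardPass hpar hchild hLf_nodup hLf_order
      hLb_nodup hLb_order I)
  exact ⟨fun R => hout ▸ hred R, hout, hred⟩

theorem yannakakis_full_reduction {ι α : Type} [Fintype ι] [DecidableEq ι] [DecidableEq α]
    (attr : ι → Finset α) (hattr : ∀ R : ι, (attr R).Nonempty)
    (hconn : (joinGraph attr).Connected)
    (T : SimpleGraph ι) (hT : IsJoinTree attr T)
    (r : ι) (par : ι → ι) (hpar_root : par r = r)
    (hpar : ∀ R S : ι, T.Adj R S ↔ ((R ≠ r ∧ par R = S) ∨ (S ≠ r ∧ par S = R)))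
    (childList : ι → List ι)
    (hchild_nodup : ∀ R : ι, (childList R).Nodup)
    (hchild : ∀ R S : ι, S ∈ childList R ↔ (S ≠ r ∧ par S = R))
    (Lf : List ι) (hLf_nodup : Lf.Nodup) (hLf_all : ∀ R : ι, R ∈ Lf)
    (hLf_order : ∀ R : ι, R ≠ r → List.Sublist [R, par R] Lf)
    (Lb : List ι) (hLb_nodup : Lb.Nodup) (hLb_all : ∀ R : ι, R ∈ Lb)
    (hLb_order : ∀ R : ι, R ≠ r → List.Sublist [par R, R] Lb)
    {D : Type v} (I : Inst attr D) :
    (∀ R : ι,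
      (backwardPass (forwardPass I Lf childList) Lb r par).rel R =
        restrict (attr_subset_attrsOf attr (Finset.mem_univ R)) '' fullOutput attr I) ∧
    fullOutput attr (backwardPass (forwardPass I Lf childList) Lb r par) =
      fullOutput attr I ∧
    FullyReduced attr (backwardPass (forwardPass I Lf childList) Lb r par) :=
  yannakakis_full_reduction_general attr T hT r par hpar childList hchild Lf hLf_nodup hLf_order Lb
    hLb_nodup hLb_order I

end JoinQuery
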